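/- Let S = [[2,0,1],[1,1,1],[1,1,1]] be the Chacon substitution matrix. There exists α ∈ (0,1) such that for every k ∈ ℕ and every ω ∈ [0,1), ‖ω · (Sᵗ)ᵏ𝟙‖_Z ≥ α · ‖ω‖_Z, where for a vector v, ‖v‖_Z = maxᵢ dist(vᵢ, ℤ) and 𝟙 = (1,1,1)ᵗ. -/

import Mathlib

/-- distance from a real number to the nearest integer -/
noncomputable def distZ (t : ℝ) : ℝ := ⨅ n : ℤ, |t - n|

/-- distance of a vector to the integer lattice: max over coordinates -/
noncomputable def vecDistZ {m : ℕ} (v : Fin m → ℝ) : ℝ := ⨆ i, distZ (v i)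

/-- The Chacon substitution matrix. -/
def chaconS : Matrix (Fin 3) (Fin 3) ℝ := !![2, 0, 1; 1, 1, 1; 1, 1, 1]

lemma abs_sub_round_min (x : ℝ) (n : ℤ) : |x - round x| ≤ |x - n| := by
  rw [abs_sub_round_eq_min]
  rcases le_or_gt n ⌊x⌋ with h | h
  · have h1 : (n : ℝ) ≤ ⌊x⌋ := by exact_mod_cast h
    have h2 : Int.fract x ≤ x - n := by
      have := Int.fract_nonneg x
      unfold Int.fract at *; linarith
    calc min (Int.fract x) (1 - Int.fract x) ≤ Int.fract x := min_le_left _ _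
      _ ≤ x - n := h2
      _ ≤ |x - n| := le_abs_self _
  · have h1 : (⌊x⌋ : ℝ) + 1 ≤ n := by exact_mod_cast h
    have h2 : 1 - Int.fract x ≤ n - x := by
      unfold Int.fract at *; linarith
    calc min (Int.fract x) (1 - Int.fract x) ≤ 1 - Int.fract x := min_le_right _ _
      _ ≤ n - x := h2
      _ ≤ |x - n| := by rw [abs_sub_comm]; exact le_abs_self _

lemma distZ_eq_round (x : ℝ) : distZ x = |x - round x| := by
  refine le_antisymm ?_ (le_ciInf fun n => abs_sub_round_min x n)
  exact ciInf_le ⟨0, fun y ⟨n, hn⟩ => hn ▸ abs_nonneg _⟩ (round x)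

lemma distZ_nonneg (x : ℝ) : 0 ≤ distZ x := by
  rw [distZ_eq_round]; exact abs_nonneg _

lemma distZ_le (x : ℝ) (n : ℤ) : distZ x ≤ |x - n| := by
  rw [distZ_eq_round]; exact abs_sub_round_min x n

lemma distZ_neg (x : ℝ) : distZ (-x) = distZ x := by
  apply le_antisymm
  · calc distZ (-x) ≤ |(-x) - (-(round x) : ℤ)| := distZ_le _ _
      _ = |x - round x| := by push_cast; rw [← abs_neg]; ring_nf
      _ = distZ x := (distZ_eq_round x).symm
  · calc distZ x ≤ |x - (-(round (-x)) : ℤ)| := distZ_le _ _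
      _ = |(-x) - round (-x)| := by push_cast; rw [← abs_neg]; ring_nf
      _ = distZ (-x) := (distZ_eq_round (-x)).symm

lemma distZ_add (a b : ℝ) : distZ (a + b) ≤ distZ a + distZ b := by
  calc distZ (a + b) ≤ |(a + b) - ((round a + round b : ℤ))| := distZ_le _ _
    _ ≤ |a - round a| + |b - round b| := by
        push_cast
        have : (a + b) - ((round a : ℝ) + round b) = (a - round a) + (b - round b) := by ring
        rw [this]; exact abs_add_le _ _
    _ = distZ a + distZ b := by rw [distZ_eq_round, distZ_eq_round]

noncomputable def chaconV (k : ℕ) : Fin 3 → ℝ := (chaconS.transpose ^ k).mulVec 1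

lemma chacon_inv (k : ℕ) : -chaconV k 0 + chaconV k 1 + chaconV k 2 = 1 := by
  induction k with
  | zero => simp [chaconV, Matrix.mulVec, dotProduct, Matrix.one_apply, Fin.sum_univ_three]
  | succ n ih =>
      set v := chaconV (n+1) with hvdef
      have hv : v = chaconS.transpose.mulVec (chaconV n) := by
        show ((chaconS.transpose ^ (n+1)).mulVec 1) = _
        rw [pow_succ', ← Matrix.mulVec_mulVec]; rfl
      set w := chaconV n with hw
      have h0 : v 0 = 2 * w 0 + w 1 + w 2 := by
        rw [hv]; simp [chaconS, Matrix.mulVec, Matrix.transpose, Fin.sum_univ_three,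
          dotProduct, Matrix.vecHead, Matrix.vecTail]
      have h1 : v 1 = w 1 + w 2 := by
        rw [hv]; simp [chaconS, Matrix.mulVec, Matrix.transpose, Fin.sum_univ_three,
          dotProduct, Matrix.vecHead, Matrix.vecTail]
      have h2 : v 2 = w 0 + w 1 + w 2 := by
        rw [hv]; simp [chaconS, Matrix.mulVec, Matrix.transpose, Fin.sum_univ_three,
          dotProduct, Matrix.vecHead, Matrix.vecTail]
      have ihw : -w 0 + w 1 + w 2 = 1 := ih
      rw [h0, h1, h2]; linarith

theorem chacon_lattice_bound :
    ∃ α ∈ Set.Ioo (0 : ℝ) 1, ∀ k : ℕ, ∀ ω ∈ Set.Ico (0 : ℝ) 1,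
      α * distZ ω ≤ vecDistZ (fun i => ω * ((chaconS.transpose ^ k).mulVec 1) i) := by
  refine ⟨1/3, ⟨by norm_num, by norm_num⟩, fun k ω _ => ?_⟩
  set v := (chaconS.transpose ^ k).mulVec (1 : Fin 3 → ℝ) with hv
  have hinv : -v 0 + v 1 + v 2 = 1 := chacon_inv k
  have hω : -(ω * v 0) + ω * v 1 + ω * v 2 = ω := by linear_combination ω * hinv
  have hsub : distZ ω ≤ distZ (ω * v 0) + distZ (ω * v 1) + distZ (ω * v 2) := by
    calc distZ ω = distZ (-(ω * v 0) + ω * v 1 + ω * v 2) := congrArg distZ hω.symm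
      _ ≤ distZ (-(ω * v 0) + ω * v 1) + distZ (ω * v 2) := distZ_add _ _
      _ ≤ distZ (-(ω * v 0)) + distZ (ω * v 1) + distZ (ω * v 2) := by
          have := distZ_add (-(ω * v 0)) (ω * v 1); linarith
      _ = distZ (ω * v 0) + distZ (ω * v 1) + distZ (ω * v 2) := by rw [distZ_neg]
  have hbdd : BddAbove (Set.range fun i : Fin 3 => distZ (ω * v i)) :=
    Set.Finite.bddAbove (Set.finite_range _)
  have hle : ∀ i : Fin 3, distZ (ω * v i) ≤ vecDistZ (fun i => ω * v i) :=
    fun i => le_ciSup hbdd i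
  have h0 := hle 0; have h1 := hle 1; have h2 := hle 2
  linarith
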